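/- arXiv:2005.08117 — 2 statements merged into one kernel-verified Lean document; each statement's English description precedes it below -/
import Mathlib

section
/- Let H be a finite-dimensional complex Hilbert space, let A = {A_x : x ∈ Ω_A} be a sharp observable on H (each A_x an orthogonal projection, ∑_x A_x = I) and let B = {B_y : y ∈ Ω_B} be an observable on H. If for every y ∈ Ω_B one has ∑_{x∈Ω_A} A_x B_y A_x = B_y (i.e. the conditioned observable (B|A) equals B), then A and B commute: A_x B_y = B_y A_x for all x ∈ Ω_A, y ∈ Ω_B. -/
open Matrix
open scoped Classical ComplexOrder

/-- The positive square root of a positive semidefinite matrix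
(junk value `0` on non-positive-semidefinite matrices). -/
noncomputable def sqrtM {ι : Type*} [Fintype ι] [DecidableEq ι] (a : Matrix ι ι ℂ) :
    Matrix ι ι ℂ :=
  if h : a.PosSemidef then
    h.1.eigenvectorUnitary.1 * diagonal ((↑) ∘ (√·) ∘ h.1.eigenvalues) *
      (star h.1.eigenvectorUnitary : Matrix ι ι ℂ)
  else 0

/-- The sequential product `a ∘ b = a^{1/2} b a^{1/2}` of effects. -/
noncomputable def seqProd {ι : Type*} [Fintype ι] [DecidableEq ι] (a b : Matrix ι ι ℂ) :
    Matrix ι ι ℂ :=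
  sqrtM a * b * sqrtM a

/-- An effect: an operator `a` with `0 ≤ a ≤ I` in the Loewner order. -/
def IsEffect {ι : Type*} [Fintype ι] [DecidableEq ι] (a : Matrix ι ι ℂ) : Prop :=
  a.PosSemidef ∧ (1 - a).PosSemidef

/-! Projections summing to the identity are mutually orthogonal, so multiplying
`b = ∑ z, P z * b * P z` on the left or on the right by `P x` gives
`P x * b = P x * b * P x = b * P x`. -/

open Finset

theorem Commute.of_sum_mul_mul_eq_self {α S : Type*} [Fintype α] [Semiring S] {P : α → S}
    (hP_idem : ∀ x, IsIdempotentElem (P x)) (hP_orth : Pairwise fun x x' => P x * P x' = 0)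
    {b : S} (hb : ∑ z, P z * b * P z = b) (x : α) : Commute (P x) b := by
  have hleft : P x * b = P x * b * P x := by
    conv_lhs => rw [← hb]
    rw [mul_sum, sum_eq_single x (fun z _ hzx => by rw [← mul_assoc, ← mul_assoc,
      hP_orth hzx.symm, zero_mul, zero_mul]) (fun h => absurd (mem_univ x) h),
      ← mul_assoc, ← mul_assoc, (hP_idem x).eq]
  have hright : b * P x = P x * b * P x := by
    conv_lhs => rw [← hb]
    rw [sum_mul, sum_eq_single x (fun z _ hzx => by rw [mul_assoc, hP_orth hzx, mul_zero])
      (fun h => absurd (mem_univ x) h), mul_assoc, (hP_idem x).eq]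
  exact hleft.trans hright.symm

namespace Matrix

variable {ι α R : Type*} [Fintype ι] [DecidableEq ι] [Fintype α]
  [Ring R] [PartialOrder R] [StarRing R] [StarOrderedRing R] [NoZeroDivisors R]

theorem mul_eq_zero_of_sum_eq_one {P : α → Matrix ι ι R} (hP_herm : ∀ x, (P x).IsHermitian)
    (hP_idem : ∀ x, IsIdempotentElem (P x)) (hP_sum : ∑ x, P x = 1) :
    Pairwise fun x x' => P x * P x' = 0 := by
  intro x x' hne
  -- `P x' = ∑ z, P x' P z P x'`, so the Gram matrices `(P z P x')ᴴ (P z P x')`, `z ≠ x'`,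
  -- sum to zero; their traces are nonnegative, hence all vanish.
  have hgram : ∀ z, (P z * P x')ᴴ * (P z * P x') = P x' * P z * P x' := fun z => by
    rw [conjTranspose_mul, (hP_herm z).eq, (hP_herm x').eq, mul_assoc, ← mul_assoc (P z),
      (hP_idem z).eq, mul_assoc]
  have hsum : ∑ z ∈ univ.erase x', (P z * P x')ᴴ * (P z * P x') = 0 := by
    rw [sum_erase_eq_sub (mem_univ x'), sum_congr rfl fun z _ => hgram z, ← sum_mul, ← mul_sum,
      hP_sum, mul_one, hgram x']
    simp only [(hP_idem x').eq, sub_self]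
  have htrace := congrArg trace hsum
  rw [trace_sum, trace_zero, sum_eq_zero_iff_of_nonneg fun z _ =>
    (posSemidef_conjTranspose_mul_self _).trace_nonneg] at htrace
  exact trace_conjTranspose_mul_self_eq_zero_iff.mp (htrace x (mem_erase.mpr ⟨hne, mem_univ x⟩))

end Matrix

theorem stmt_0_general {ι α β : Type*} [Fintype ι] [DecidableEq ι] [Fintype α]
    (A : α → Matrix ι ι ℂ) (B : β → Matrix ι ι ℂ)
    (hA_herm : ∀ x, (A x).IsHermitian) (hA_idem : ∀ x, A x * A x = A x)
    (hA_sum : ∑ x, A x = 1)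
    (hcond : ∀ y, ∑ x, A x * B y * A x = B y) :
    ∀ x y, A x * B y = B y * A x := fun x y =>
  Commute.of_sum_mul_mul_eq_self hA_idem (Matrix.mul_eq_zero_of_sum_eq_one hA_herm hA_idem hA_sum)
    (hcond y) x

/-- If `A` is a sharp observable, `B` is an observable, and the conditioned observable
`(B|A)` equals `B`, then `A` and `B` commute. -/
theorem stmt_0 {ι α β : Type*} [Fintype ι] [DecidableEq ι] [Fintype α] [Fintype β]
    (A : α → Matrix ι ι ℂ) (B : β → Matrix ι ι ℂ)
    (hA_herm : ∀ x, (A x).IsHermitian) (hA_idem : ∀ x, A x * A x = A x)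
    (hA_sum : ∑ x, A x = 1)
    (hB_eff : ∀ y, IsEffect (B y)) (hB_sum : ∑ y, B y = 1)
    (hcond : ∀ y, ∑ x, A x * B y * A x = B y) :
    ∀ x y, A x * B y = B y * A x :=
  stmt_0_general A B hA_herm hA_idem hA_sum hcond
end

section
/- Let {ψ_i : i = 1,…,d} and {φ_j : j = 1,…,d} be orthonormal bases of a d-dimensional complex Hilbert space, and let A = {P_{ψ_i}} and B = {P_{φ_j}} be the corresponding atomic observables. Then A and B are complementary (i.e. (B_{φ_j} | A_{ψ_i}) = P_{ψ_i}∘P_{φ_j} = (1/d) P_{ψ_i} and P_{φ_j}∘P_{ψ_i} = (1/d) P_{φ_j} for all i, j) if and only if the two bases are mutually unbiased, i.e. |⟨ψ_i, φ_j⟩|² = 1/d for all i, j. -/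
/-!
For a unit vector `ψ` the atom `P_ψ` is a positive idempotent, so its square root is itself and
`P_ψ ∘ P_φ = P_ψ P_φ P_ψ = |⟨ψ, φ⟩|² P_ψ`. Since `P_ψ ≠ 0` and `|⟨φ, ψ⟩| = |⟨ψ, φ⟩|`, each of the
two complementarity identities for the pair `(i, j)` says exactly `|⟨ψ_i, φ_j⟩|² = 1/d`.
-/

open Matrix
open scoped Classical ComplexOrder

/-- The rank-one projection (atom) `|ψ⟩⟨ψ|` associated to a vector `ψ`. -/
def outer {ι : Type*} (ψ : ι → ℂ) : Matrix ι ι ℂ := vecMulVec ψ (star ψ)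

section
variable {ι : Type*} [Fintype ι]

lemma outer_mul_outer (ψ φ : ι → ℂ) :
    outer ψ * outer φ = (star ψ ⬝ᵥ φ) • vecMulVec ψ (star φ) := by
  rw [outer, outer, vecMulVec_mul_vecMulVec, vecMulVec_smul]

lemma posSemidef_outer (ψ : ι → ℂ) : (outer ψ).PosSemidef :=
  posSemidef_vecMulVec_self_star ψ

lemma isIdempotentElem_outer {ψ : ι → ℂ} (hψ : star ψ ⬝ᵥ ψ = 1) :
    IsIdempotentElem (outer ψ) := by
  rw [IsIdempotentElem, outer_mul_outer, hψ, one_smul, outer]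

lemma outer_ne_zero {ψ : ι → ℂ} (hψ : star ψ ⬝ᵥ ψ = 1) : outer ψ ≠ 0 := by
  intro h
  have htrace := congrArg trace h
  rw [outer, trace_vecMulVec, dotProduct_comm, hψ, trace_zero] at htrace
  exact one_ne_zero htrace

variable [DecidableEq ι]

lemma sqrtM_eq_cfc {a : Matrix ι ι ℂ} (ha : a.PosSemidef) : sqrtM a = cfc Real.sqrt a := by
  rw [sqrtM, dif_pos ha, ha.1.cfc_eq, IsHermitian.cfc]
  rfl

lemma sqrtM_of_isIdempotentElem {a : Matrix ι ι ℂ} (ha : a.PosSemidef)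
    (hid : IsIdempotentElem a) : sqrtM a = a := by
  rw [sqrtM_eq_cfc ha, cfc_congr (g := id), cfc_id ℝ a ha.1.isSelfAdjoint]
  intro x hx
  rcases hid.spectrum_subset ℝ hx with rfl | rfl <;> simp

lemma seqProd_outer_outer {ψ : ι → ℂ} (hψ : star ψ ⬝ᵥ ψ = 1) (φ : ι → ℂ) :
    seqProd (outer ψ) (outer φ) = ‖star ψ ⬝ᵥ φ‖ ^ 2 • outer ψ := by
  rw [seqProd, sqrtM_of_isIdempotentElem (posSemidef_outer ψ) (isIdempotentElem_outer hψ),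
    outer_mul_outer, smul_mul_assoc, outer, vecMulVec_mul_vecMulVec, vecMulVec_smul, smul_smul,
    star_dotProduct φ ψ, Complex.star_def, Complex.mul_conj, Complex.normSq_eq_norm_sq,
    Complex.coe_smul]

end

theorem stmt_8_general {d : ℕ} (ψ φ : Fin d → (Fin d → ℂ))
    (hψ_on : ∀ i j, star (ψ i) ⬝ᵥ ψ j = if i = j then 1 else 0)
    (hφ_on : ∀ i j, star (φ i) ⬝ᵥ φ j = if i = j then 1 else 0) :
    (∀ i j, seqProd (outer (ψ i)) (outer (φ j)) = ((1 : ℝ) / d) • outer (ψ i) ∧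
        seqProd (outer (φ j)) (outer (ψ i)) = ((1 : ℝ) / d) • outer (φ j))
      ↔ ∀ i j, ‖star (ψ i) ⬝ᵥ φ j‖ ^ 2 = 1 / (d : ℝ) := by
  have hψ : ∀ i, star (ψ i) ⬝ᵥ ψ i = 1 := fun i => by simpa using hψ_on i i
  have hφ : ∀ j, star (φ j) ⬝ᵥ φ j = 1 := fun j => by simpa using hφ_on j j
  have hnorm_comm : ∀ i j, ‖star (φ j) ⬝ᵥ ψ i‖ = ‖star (ψ i) ⬝ᵥ φ j‖ := fun i j => by
    rw [star_dotProduct, norm_star]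
  simp only [seqProd_outer_outer (hψ _), seqProd_outer_outer (hφ _), hnorm_comm,
    (smul_left_injective ℝ (outer_ne_zero (hψ _))).eq_iff,
    (smul_left_injective ℝ (outer_ne_zero (hφ _))).eq_iff, and_self]

/-- The atomic observables associated to two orthonormal bases of a `d`-dimensional
complex Hilbert space are complementary if and only if the bases are mutually
unbiased, i.e. `|⟨ψ_i, φ_j⟩|² = 1/d` for all `i`, `j`. -/
theorem stmt_8 {d : ℕ} (ψ φ : Fin d → (Fin d → ℂ))
    (hψ_on : ∀ i j, star (ψ i) ⬝ᵥ ψ j = if i = j then 1 else 0)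
    (hφ_on : ∀ i j, star (φ i) ⬝ᵥ φ j = if i = j then 1 else 0)
    (hψ_sum : ∑ i, outer (ψ i) = 1) (hφ_sum : ∑ j, outer (φ j) = 1) :
    (∀ i j, seqProd (outer (ψ i)) (outer (φ j)) = ((1 : ℝ) / d) • outer (ψ i) ∧
        seqProd (outer (φ j)) (outer (ψ i)) = ((1 : ℝ) / d) • outer (φ j))
      ↔ ∀ i j, ‖star (ψ i) ⬝ᵥ φ j‖ ^ 2 = 1 / (d : ℝ) :=
  stmt_8_general ψ φ hψ_on hφ_on
end
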